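/- The function H is twice continuously differentiable on ℝ, with H''(x) = -λ x⁻³ f(-1/x) for x < 0 and H''(x) = 0 for x ≥ 0; in particular H''(x) → 0 as x → 0⁻. -/

import Mathlib

/-!
Integrating by parts, `∫₀ᵇ F = b F(b) - G(b)`, so `H(x) = λ (F(-1/x) + x G(-1/x))` for `x < 0`.
Differentiating with `(-1/x)' = x⁻²`, the two terms `f(-1/x)/x²` cancel and `H' = λ G(-1/x)`,
whence `H'' = -λ x⁻³ f(-1/x) = λ p³ f(p)` at `p = -1/x`. As `x → 0⁻` we have `-1/x → ∞`, so
`F → 1`, `G → m̄` and `p³ f(p) → 0` make `H`, `H'`, `H''` continuous at `0`, and a function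
continuous at a point whose derivative elsewhere extends continuously to it is differentiable there.
-/

open MeasureTheory Filter Set Topology

section Gluing

variable {φ ψ : ℝ → ℝ} {a : ℝ}

theorem continuousAt_ite_lt (hψ : ContinuousAt ψ a) (hφ : Tendsto φ (𝓝[<] a) (𝓝 (ψ a))) :
    ContinuousAt (fun x => if x < a then φ x else ψ x) a := by
  rw [continuousAt_iff_continuous_left_right, ← continuousWithinAt_Iio_iff_Iic]
  constructor
  · refine (hφ.congr' ?_).trans (by simp)
    filter_upwards [self_mem_nhdsWithin] with x hx
    simp [mem_Iio.1 hx]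
  · refine hψ.continuousWithinAt.congr (fun x hx => ?_) (by simp)
    simp [not_lt.2 (mem_Ici.1 hx)]

theorem continuous_ite_lt (hφ : ContinuousOn φ (Iio a)) (hψ : Continuous ψ)
    (hlim : Tendsto φ (𝓝[<] a) (𝓝 (ψ a))) :
    Continuous (fun x => if x < a then φ x else ψ x) := by
  refine continuous_iff_continuousAt.2 fun x => ?_
  rcases lt_trichotomy x a with hx | rfl | hx
  · refine (hφ.continuousAt (Iio_mem_nhds hx)).congr ?_
    filter_upwards [Iio_mem_nhds hx] with y hy
    simp [mem_Iio.1 hy]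
  · exact continuousAt_ite_lt hψ.continuousAt hlim
  · refine hψ.continuousAt.congr ?_
    filter_upwards [Ioi_mem_nhds hx] with y hy
    simp [(mem_Ioi.1 hy).not_gt]

theorem hasDerivAt_ite_lt {φ' ψ' : ℝ → ℝ}
    (hφ : ∀ x < a, HasDerivAt φ (φ' x) x) (hψ : ∀ x, a < x → HasDerivAt ψ (ψ' x) x)
    (hψa : ContinuousAt ψ a) (hψ'a : ContinuousAt ψ' a)
    (hφlim : Tendsto φ (𝓝[<] a) (𝓝 (ψ a))) (hφ'lim : Tendsto φ' (𝓝[<] a) (𝓝 (ψ' a))) (x : ℝ) :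
    HasDerivAt (fun x => if x < a then φ x else ψ x) (if x < a then φ' x else ψ' x) x := by
  refine hasDerivAt_of_hasDerivAt_of_ne' (fun y hy => ?_) (continuousAt_ite_lt hψa hφlim)
    (continuousAt_ite_lt hψ'a hφ'lim) x
  rcases hy.lt_or_gt with hy | hy
  · rw [if_pos hy]
    refine (hφ y hy).congr_of_eventuallyEq ?_
    filter_upwards [Iio_mem_nhds hy] with z hz
    simp [mem_Iio.1 hz]
  · rw [if_neg hy.not_gt]
    refine (hψ y hy).congr_of_eventuallyEq ?_
    filter_upwards [Ioi_mem_nhds hy] with z hz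
    simp [(mem_Ioi.1 hz).not_gt]

end Gluing

theorem integral_primitive_eq_mul_integral_sub {f : ℝ → ℝ} (hf : Continuous f) (a b : ℝ) :
    ∫ p in a..b, ∫ q in a..p, f q = b * (∫ q in a..b, f q) - ∫ q in a..b, q * f q := by
  have hF : Continuous fun p => ∫ q in a..p, f q :=
    intervalIntegral.continuous_primitive (fun _ _ => hf.intervalIntegrable _ _) a
  have hderiv : ∀ y ∈ uIcc a b, HasDerivAt
      (fun p => p * (∫ q in a..p, f q) - ∫ q in a..p, q * f q) (∫ q in a..y, f q) y := by
    intro y _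
    have hF' := (hf.integral_hasStrictDerivAt a y).hasDerivAt
    have hG' :=
      ((by fun_prop : Continuous fun q => q * f q).integral_hasStrictDerivAt a y).hasDerivAt
    exact (((hasDerivAt_id' y).fun_mul hF').fun_sub hG').congr_deriv (by ring)
  rw [intervalIntegral.integral_eq_sub_of_hasDerivAt hderiv (hF.intervalIntegrable a b)]
  simp

theorem tendsto_neg_one_div_nhdsLT_zero :
    Tendsto (fun x : ℝ => -1 / x) (𝓝[<] 0) atTop := by
  simpa [neg_div, one_div] using tendsto_inv_nhdsLT_zero (𝕜 := ℝ)

theorem hasDerivAt_neg_one_div {x : ℝ} (hx : x ≠ 0) :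
    HasDerivAt (fun y : ℝ => -1 / y) (x ^ 2)⁻¹ x := by
  simpa [neg_div, one_div] using (hasDerivAt_inv hx).fun_neg

section Inversion

variable {f F G : ℝ → ℝ}

theorem hasDerivAt_comp_neg_one_div (hG : ∀ b, HasDerivAt G (b * f b) b) {x : ℝ} (hx : x ≠ 0) :
    HasDerivAt (fun y => G (-1 / y)) (-(x ^ 3)⁻¹ * f (-1 / x)) x :=
  ((hG _).comp x (hasDerivAt_neg_one_div hx)).congr_deriv (by field_simp)

theorem hasDerivAt_comp_neg_one_div_add_mul (hF : ∀ b, HasDerivAt F (f b) b)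
    (hG : ∀ b, HasDerivAt G (b * f b) b) {x : ℝ} (hx : x ≠ 0) :
    HasDerivAt (fun y => F (-1 / y) + y * G (-1 / y)) (G (-1 / x)) x :=
  (((hF _).comp x (hasDerivAt_neg_one_div hx)).add
    ((hasDerivAt_id' x).fun_mul (hasDerivAt_comp_neg_one_div hG hx))).congr_deriv
    (by field_simp; ring)

theorem tendsto_comp_neg_one_div_add_mul {L M : ℝ} (hF : Tendsto F atTop (𝓝 L))
    (hG : Tendsto G atTop (𝓝 M)) :
    Tendsto (fun x => F (-1 / x) + x * G (-1 / x)) (𝓝[<] 0) (𝓝 L) := by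
  have hx : Tendsto (fun x : ℝ => x) (𝓝[<] 0) (𝓝 0) :=
    tendsto_nhdsWithin_of_tendsto_nhds tendsto_id
  simpa using (hF.comp tendsto_neg_one_div_nhdsLT_zero).add
    (hx.mul (hG.comp tendsto_neg_one_div_nhdsLT_zero))

theorem tendsto_neg_inv_pow_mul_comp_neg_one_div
    (hf : Tendsto (fun p => p ^ 3 * f p) atTop (𝓝 0)) :
    Tendsto (fun x => -(x ^ 3)⁻¹ * f (-1 / x)) (𝓝[<] 0) (𝓝 0) := by
  refine (hf.comp tendsto_neg_one_div_nhdsLT_zero).congr fun x => ?_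
  simp [Odd.neg_pow (by decide : Odd 3), neg_div, one_div]

end Inversion

theorem stmt_3_general (f F G H : ℝ → ℝ) (mbar lam : ℝ)
    (hf_cont : Continuous f)
    (hf_int : (∫ p in Set.Ioi (0 : ℝ), f p) = 1)
    (hf_tail : Filter.Tendsto (fun p : ℝ => p ^ 3 * f p) Filter.atTop (nhds 0))
    (hmean_int : MeasureTheory.IntegrableOn (fun p : ℝ => p * f p) (Set.Ioi 0))
    (hmbar : mbar = ∫ p in Set.Ioi (0 : ℝ), p * f p)
    (hF : ∀ b : ℝ, F b = ∫ p in (0 : ℝ)..b, f p)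
    (hG : ∀ b : ℝ, G b = ∫ p in (0 : ℝ)..b, p * f p)
    (hHneg : ∀ x < (0 : ℝ), H x = -(lam * x) * ∫ p in (0 : ℝ)..(-1 / x), F p)
    (hHpos : ∀ x : ℝ, 0 ≤ x → H x = lam * (1 + x * mbar)) :
    ∃ H' H'' : ℝ → ℝ, Continuous H' ∧ Continuous H'' ∧
      (∀ x : ℝ, HasDerivAt H (H' x) x) ∧
      (∀ x : ℝ, HasDerivAt H' (H'' x) x) ∧
      (∀ x < (0 : ℝ), H'' x = -lam * (x ^ 3)⁻¹ * f (-1 / x)) ∧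
      (∀ x : ℝ, 0 ≤ x → H'' x = 0) ∧
      Filter.Tendsto H'' (nhdsWithin 0 (Set.Iio 0)) (nhds 0) := by
  have hFd (b : ℝ) : HasDerivAt F (f b) b :=
    funext hF ▸ (hf_cont.integral_hasStrictDerivAt 0 b).hasDerivAt
  have hGd (b : ℝ) : HasDerivAt G (b * f b) b :=
    funext hG ▸ ((continuous_id.mul hf_cont).integral_hasStrictDerivAt 0 b).hasDerivAt
  have hFlim : Tendsto F atTop (𝓝 1) := by
    rw [funext hF, ← hf_int]
    -- a non-integrable function has Bochner integral `0`, so `∫ f = 1` forces integrability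
    exact intervalIntegral_tendsto_integral_Ioi 0
      (Integrable.of_integral_ne_zero (by simp [hf_int])) tendsto_id
  have hGlim : Tendsto G atTop (𝓝 mbar) := by
    rw [funext hG, hmbar]
    exact intervalIntegral_tendsto_integral_Ioi 0 hmean_int tendsto_id
  have hH : H = fun x =>
      if x < 0 then lam * (F (-1 / x) + x * G (-1 / x)) else lam * (1 + x * mbar) := by
    funext x
    split_ifs with hx
    · simp only [hHneg x hx, hF, hG, integral_primitive_eq_mul_integral_sub hf_cont]
      field_simp [hx.ne]
      ring
    · exact hHpos x (not_lt.1 hx)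
  have hG'lim : Tendsto (fun x => lam * G (-1 / x)) (𝓝[<] 0) (𝓝 (lam * mbar)) :=
    (hGlim.comp tendsto_neg_one_div_nhdsLT_zero).const_mul lam
  have hH''lim : Tendsto (fun x => lam * (-(x ^ 3)⁻¹ * f (-1 / x))) (𝓝[<] 0) (𝓝 0) := by
    simpa using (tendsto_neg_inv_pow_mul_comp_neg_one_div hf_tail).const_mul lam
  have hHd := hasDerivAt_ite_lt (a := 0) (ψ' := fun _ => lam * mbar)
    (fun x hx => (hasDerivAt_comp_neg_one_div_add_mul hFd hGd hx.ne).const_mul lam)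
    (fun x _ => ((hasDerivAt_mul_const mbar).const_add 1).const_mul lam) (by fun_prop)
    continuousAt_const
    (by simpa using (tendsto_comp_neg_one_div_add_mul hFlim hGlim).const_mul lam) hG'lim
  have hH'd := hasDerivAt_ite_lt (a := 0) (ψ := fun _ => lam * mbar) (ψ' := fun _ => 0)
    (fun x hx => (hasDerivAt_comp_neg_one_div hGd hx.ne).const_mul lam)
    (fun x _ => hasDerivAt_const x _) continuousAt_const continuousAt_const hG'lim hH''lim
  have hH''on : ContinuousOn (fun x => lam * (-(x ^ 3)⁻¹ * f (-1 / x))) (Iio 0) := by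
    intro x hx
    have hx0 : x ≠ 0 := (mem_Iio.1 hx).ne
    exact ContinuousAt.continuousWithinAt (by fun_prop (disch := simp [hx0]))
  subst hH
  refine ⟨_, _, continuous_iff_continuousAt.2 fun x => (hH'd x).continuousAt,
    continuous_ite_lt hH''on continuous_const hH''lim, hHd, hH'd, fun x hx => ?_,
    fun x hx => if_neg hx.not_gt, ?_⟩
  · simp only [if_pos hx]
    ring
  · exact hH''lim.congr' (eventually_nhdsWithin_of_forall fun x hx => (if_pos hx).symm)

/-- The function `H` is twice continuously differentiable on `ℝ`, with
`H''(x) = -λ x⁻³ f(-1/x)` for `x < 0` and `H''(x) = 0` for `x ≥ 0`;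
in particular `H''(x) → 0` as `x → 0⁻`. -/
theorem stmt_3 (f F G H : ℝ → ℝ) (mbar lam : ℝ)
    (hf_cont : Continuous f)
    (hf_nonpos : ∀ p ≤ (0 : ℝ), f p = 0)
    (hf_pos : ∀ p : ℝ, 0 < p → 0 < f p)
    (hf_int : (∫ p in Set.Ioi (0 : ℝ), f p) = 1)
    (hf_tail : Filter.Tendsto (fun p : ℝ => p ^ 3 * f p) Filter.atTop (nhds 0))
    (hmean_int : MeasureTheory.IntegrableOn (fun p : ℝ => p * f p) (Set.Ioi 0))
    (hmbar : mbar = ∫ p in Set.Ioi (0 : ℝ), p * f p)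
    (hF : ∀ b : ℝ, F b = ∫ p in (0 : ℝ)..b, f p)
    (hG : ∀ b : ℝ, G b = ∫ p in (0 : ℝ)..b, p * f p)
    (hlam : 0 < lam)
    (hHneg : ∀ x < (0 : ℝ), H x = -(lam * x) * ∫ p in (0 : ℝ)..(-1 / x), F p)
    (hHpos : ∀ x : ℝ, 0 ≤ x → H x = lam * (1 + x * mbar)) :
    ∃ H' H'' : ℝ → ℝ, Continuous H' ∧ Continuous H'' ∧
      (∀ x : ℝ, HasDerivAt H (H' x) x) ∧
      (∀ x : ℝ, HasDerivAt H' (H'' x) x) ∧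
      (∀ x < (0 : ℝ), H'' x = -lam * (x ^ 3)⁻¹ * f (-1 / x)) ∧
      (∀ x : ℝ, 0 ≤ x → H'' x = 0) ∧
      Filter.Tendsto H'' (nhdsWithin 0 (Set.Iio 0)) (nhds 0) :=
  stmt_3_general f F G H mbar lam hf_cont hf_int hf_tail hmean_int hmbar hF hG hHneg hHpos
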